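/- arXiv:1902.10930 — 2 statements merged into one kernel-verified Lean document; each statement's English description precedes it below -/
import Mathlib

section
/- In a Hadamard space (X,d), for any four points x, y, v, w the inequality d(x,v)^2 + d(y,w)^2 ≤ d(x,w)^2 + d(y,v)^2 + 2 d(x,y) d(v,w) holds. -/
open Set

/-- A geodesic segment from `x` to `y`, parametrized proportionally to arclength on `[0,1]`. -/
structure IsGeodesicSeg {X : Type*} [MetricSpace X] (γ : ℝ → X) (x y : X) : Prop where
  src : γ 0 = x
  tgt : γ 1 = y
  dist_eq : ∀ s ∈ Set.Icc (0:ℝ) 1, ∀ t ∈ Set.Icc (0:ℝ) 1,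
    dist (γ s) (γ t) = |s - t| * dist x y

/-- A Hadamard space: a complete geodesic metric space satisfying the CAT(0)
comparison condition (formulated via the equivalent quadratic comparison inequality). -/
class HadamardSpace (X : Type*) extends MetricSpace X, CompleteSpace X where
  geod : X → X → ℝ → X
  geod_spec : ∀ x y : X, IsGeodesicSeg (geod x y) x y
  cat0 : ∀ x y z : X, ∀ t ∈ Set.Icc (0:ℝ) 1,
    dist z (geod x y t) ^ 2 ≤
      (1 - t) * dist z x ^ 2 + t * dist z y ^ 2 - t * (1 - t) * dist x y ^ 2

/-!
For a point `m` on the geodesic from `y` to `w` at parameter `t`, square the triangle inequality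
`d(x, v) ≤ d(x, m) + d(m, v)` with the weights `t` and `1 - t` and bound `d(x, m)`, `d(v, m)` by the
CAT(0) comparison inequality. The weights make the `d(y,w)²`-terms of the two comparisons add up to
exactly `d(y,w)²`, which leaves
`d(x,v)² + d(y,w)² ≤ d(x,w)² + d(y,v)² + (1-t)/t · d(x,y)² + t/(1-t) · d(v,w)²`;
the choice `t = d(x,y) / (d(x,y) + d(v,w))` turns the last two terms into `d(x,y) d(v,w)` each.
-/

lemma add_sq_le_sq_div_add_sq_div (a b : ℝ) {t : ℝ} (ht : t ∈ Ioo 0 1) :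
    (a + b) ^ 2 ≤ a ^ 2 / t + b ^ 2 / (1 - t) := by
  obtain ⟨ht₀, ht₁⟩ := ht
  have h1t : 0 < 1 - t := sub_pos.2 ht₁
  rw [div_add_div _ _ ht₀.ne' h1t.ne', le_div_iff₀ (mul_pos ht₀ h1t)]
  nlinarith [sq_nonneg ((1 - t) * a - t * b)]

namespace HadamardSpace

variable {X : Type*} [HadamardSpace X]

lemma dist_sq_add_dist_sq_le_of_mem_Ioo (x y v w : X) {t : ℝ} (ht : t ∈ Ioo 0 1) :
    dist x v ^ 2 + dist y w ^ 2 ≤ dist x w ^ 2 + dist y v ^ 2 +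
      (1 - t) / t * dist x y ^ 2 + t / (1 - t) * dist v w ^ 2 := by
  obtain ⟨ht₀, ht₁⟩ := ht
  have ht_mem_Icc : t ∈ Icc (0 : ℝ) 1 := ⟨ht₀.le, ht₁.le⟩
  have h1t : 0 < 1 - t := sub_pos.2 ht₁
  set m := geod y w t
  calc dist x v ^ 2 + dist y w ^ 2
      ≤ (dist x m + dist v m) ^ 2 + dist y w ^ 2 := by
        gcongr
        rw [dist_comm v m]
        exact dist_triangle x m v
    _ ≤ dist x m ^ 2 / t + dist v m ^ 2 / (1 - t) + dist y w ^ 2 := by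
        gcongr
        exact add_sq_le_sq_div_add_sq_div _ _ ⟨ht₀, ht₁⟩
    _ ≤ ((1 - t) * dist x y ^ 2 + t * dist x w ^ 2 - t * (1 - t) * dist y w ^ 2) / t +
          ((1 - t) * dist v y ^ 2 + t * dist v w ^ 2 - t * (1 - t) * dist y w ^ 2) / (1 - t) +
          dist y w ^ 2 := by
        gcongr
        exacts [cat0 y w x t ht_mem_Icc, cat0 y w v t ht_mem_Icc]
    _ = dist x w ^ 2 + dist y v ^ 2 +
          (1 - t) / t * dist x y ^ 2 + t / (1 - t) * dist v w ^ 2 := by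
        rw [dist_comm v y]
        field_simp
        ring

end HadamardSpace

/-- In a Hadamard space, the quadrilateral (Reshetnyak-type) inequality
`d(x,v)² + d(y,w)² ≤ d(x,w)² + d(y,v)² + 2 d(x,y) d(v,w)` holds for all four points. -/
theorem hadamard_quadrilateral_inequality {X : Type*} [HadamardSpace X] (x y v w : X) :
    dist x v ^ 2 + dist y w ^ 2 ≤
      dist x w ^ 2 + dist y v ^ 2 + 2 * dist x y * dist v w := by
  rcases eq_or_ne x y with rfl | hxy
  · simp [add_comm]
  rcases eq_or_ne v w with rfl | hvw
  · simp
  have ha := dist_pos.2 hxy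
  have hb := dist_pos.2 hvw
  set a := dist x y
  set b := dist v w
  have ht : a / (a + b) ∈ Ioo 0 1 := ⟨by positivity, (div_lt_one (by positivity)).2 (by linarith)⟩
  have h := HadamardSpace.dist_sq_add_dist_sq_le_of_mem_Ioo x y v w ht
  have h1t : 1 - a / (a + b) = b / (a + b) := by field_simp; ring
  have hbal : (1 - a / (a + b)) / (a / (a + b)) * a ^ 2 + a / (a + b) / (1 - a / (a + b)) * b ^ 2
      = 2 * a * b := by
    rw [h1t]
    field_simp
    ring
  linarith
end

section
/- Let (H,d) be a locally compact Hadamard space and Ω ⊂ ℝ^n open and bounded. Then the set of Lipschitz continuous functions from Ω to H is dense in L^p(Ω, H) for every p ∈ [1,∞). -/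
open Set

open MeasureTheory

/-!
A locally compact Hadamard space is proper: along geodesics, `closedBall x (r + δ)` lies in the
`δ`-neighbourhood of `closedBall x r`, so the radii of compact balls form an interval that is
both closed and open in `[0, ∞)`. Hence `H` is separable, and a measurable `f` is the `L^p`-limit
of simple maps `s`. Inner regularity gives compact sets `K y` inside the fibres `s⁻¹{y}` carrying
almost all the mass; being finitely many, they are uniformly separated. Moving along the geodesic
from a base point `a` to `y` by the amount `thickenedIndicator δ (K y)` then defines a Lipschitz
map that equals `s` on `⋃ K y` and stays in a fixed ball around `a`, so it is `L^p`-close to `s`.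
-/

open Metric Filter Topology
open scoped NNReal ENNReal

theorem totallyBounded_of_forall_isCompact_subset_thickening {X : Type*} [PseudoMetricSpace X]
    {s : Set X} (h : ∀ ε > 0, ∃ K, IsCompact K ∧ s ⊆ thickening ε K) : TotallyBounded s := by
  refine totallyBounded_iff.2 fun ε hε => ?_
  obtain ⟨K, hK, hsK⟩ := h (ε / 2) (half_pos hε)
  obtain ⟨t, -, ht, hKt⟩ := hK.finite_cover_balls (half_pos hε)
  refine ⟨t, ht, fun z hz => ?_⟩
  obtain ⟨k, hk, hzk⟩ := mem_thickening_iff.1 (hsK hz)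
  obtain ⟨y, hy, hky⟩ := mem_iUnion₂.1 (hKt hk)
  exact mem_iUnion₂.2 ⟨y, hy, (dist_triangle z k y).trans_lt (by linarith [mem_ball.1 hky])⟩

theorem exists_pos_pairwise_disjoint_thickening {X ι : Type*} [MetricSpace X]
    {K : ι → Set X} (hfin : {i | (K i).Nonempty}.Finite) (hK : ∀ i, IsCompact (K i))
    (hd : Pairwise fun i j => Disjoint (K i) (K j)) :
    ∃ δ > 0, Pairwise fun i j => Disjoint (thickening δ (K i)) (thickening δ (K j)) := by
  have hev : ∀ᶠ δ in 𝓝[>] (0 : ℝ), ∀ i ∈ {i | (K i).Nonempty}, ∀ j ∈ {i | (K i).Nonempty},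
      i ≠ j → Disjoint (thickening δ (K i)) (thickening δ (K j)) := by
    simp only [eventually_all_finite hfin, eventually_imp_distrib_left]
    intro i _ j _ hij
    obtain ⟨δ, hδ, h⟩ := (hd hij).exists_thickenings (hK i) (hK j).isClosed
    filter_upwards [Ioo_mem_nhdsGT hδ] with δ' hδ'
    exact h.mono (thickening_mono hδ'.2.le _) (thickening_mono hδ'.2.le _)
  obtain ⟨δ, hδ, hδ0⟩ := (hev.and self_mem_nhdsWithin).exists
  refine ⟨δ, hδ0, fun i j hij => ?_⟩
  rcases (K i).eq_empty_or_nonempty with hi | hi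
  · simp [hi]
  rcases (K j).eq_empty_or_nonempty with hj | hj
  · simp [hj]
  exact hδ i hi j hj hij

namespace HadamardSpace

variable {X : Type*} [HadamardSpace X]

theorem geod_zero (x y : X) : geod x y 0 = x := (geod_spec x y).src

theorem geod_one (x y : X) : geod x y 1 = y := (geod_spec x y).tgt

theorem dist_geod_geod (x y : X) {s t : ℝ} (hs : s ∈ Icc (0 : ℝ) 1) (ht : t ∈ Icc (0 : ℝ) 1) :
    dist (geod x y s) (geod x y t) = |s - t| * dist x y :=
  (geod_spec x y).dist_eq s hs t ht

theorem dist_geod_left (x y : X) {t : ℝ} (ht : t ∈ Icc (0 : ℝ) 1) :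
    dist x (geod x y t) = t * dist x y := by
  have h := dist_geod_geod x y (s := 0) (by simp) ht
  rwa [geod_zero, zero_sub, abs_neg, abs_of_nonneg ht.1] at h

theorem dist_geod_right (x y : X) {t : ℝ} (ht : t ∈ Icc (0 : ℝ) 1) :
    dist (geod x y t) y = (1 - t) * dist x y := by
  have h := dist_geod_geod x y (t := 1) ht (by simp)
  rwa [geod_one, abs_of_nonpos (by linarith [ht.2]), neg_sub] at h

theorem closedBall_add_subset_cthickening (x : X) {r : ℝ} (hr : 0 ≤ r) (δ : ℝ) :
    closedBall x (r + δ) ⊆ cthickening δ (closedBall x r) := by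
  intro z hz
  rw [mem_closedBall'] at hz
  rcases le_or_gt (dist x z) r with hzr | hzr
  · exact self_subset_cthickening _ (mem_closedBall'.2 hzr)
  have hd : 0 < dist x z := hr.trans_lt hzr
  have ht : r / dist x z ∈ Icc (0 : ℝ) 1 := ⟨by positivity, (div_le_one hd).2 hzr.le⟩
  refine mem_cthickening_of_dist_le z (geod x z (r / dist x z)) δ _ ?_ ?_
  · rw [mem_closedBall', dist_geod_left x z ht, div_mul_cancel₀ _ hd.ne']
  · rw [dist_comm, dist_geod_right x z ht, sub_mul, one_mul, div_mul_cancel₀ _ hd.ne']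
    linarith

theorem isCompact_closedBall_of_forall_lt {x : X} {ρ : ℝ}
    (h : ∀ r < ρ, IsCompact (closedBall x r)) : IsCompact (closedBall x ρ) := by
  rcases le_or_gt ρ 0 with hρ | hρ
  · exact (subsingleton_closedBall x hρ).isCompact
  refine TotallyBounded.isCompact_of_isClosed ?_ isClosed_closedBall
  refine totallyBounded_of_forall_isCompact_subset_thickening fun ε hε => ?_
  set r := max 0 (ρ - ε / 2)
  refine ⟨closedBall x r, h r (max_lt hρ (by linarith)), ?_⟩
  calc closedBall x ρ = closedBall x (r + (ρ - r)) := by rw [add_sub_cancel]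
    _ ⊆ cthickening (ρ - r) (closedBall x r) :=
      closedBall_add_subset_cthickening x (le_max_left _ _) _
    _ ⊆ thickening ε (closedBall x r) :=
      cthickening_subset_thickening' hε (by linarith [le_max_right 0 (ρ - ε / 2)]) _

theorem properSpace [LocallyCompactSpace X] : ProperSpace X := by
  refine ⟨fun x => ?_⟩
  by_contra! hbad
  set S := {r | ¬IsCompact (closedBall x r)}
  have hS0 : ∀ r ∈ S, 0 ≤ r := fun r hr => not_lt.1 fun h => hr <| by
    rw [closedBall_eq_empty.2 h]
    exact isCompact_empty
  have hρ : IsCompact (closedBall x (sInf S)) := isCompact_closedBall_of_forall_lt fun r hr =>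
    not_not.1 (notMem_of_lt_csInf hr ⟨0, hS0⟩)
  obtain ⟨δ, hδ, hδc⟩ := hρ.exists_isCompact_cthickening
  obtain ⟨r, hrS, hr⟩ := exists_lt_of_csInf_lt hbad (lt_add_of_pos_right (sInf S) hδ)
  exact hrS <| hδc.of_isClosed_subset isClosed_closedBall <|
    (closedBall_subset_closedBall hr.le).trans
      (closedBall_add_subset_cthickening x (le_csInf hbad hS0) δ)

theorem lipschitzWith_geod_comp {α : Type*} [PseudoMetricSpace α] (a : X) {φ : X → α → ℝ≥0}
    {L R : ℝ≥0} (hφ : ∀ w, LipschitzWith L (φ w)) (hφ1 : ∀ w x, φ w x ≤ 1) {v : α → X}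
    (hv : ∀ x w, w ≠ v x → φ w x = 0) (hR : ∀ x, dist a (v x) ≤ R) :
    LipschitzWith (2 * R * L) fun x => geod a (v x) (φ (v x) x) := by
  have hI : ∀ w x, (φ w x : ℝ) ∈ Icc (0 : ℝ) 1 := fun w x => ⟨(φ w x).coe_nonneg, hφ1 w x⟩
  have key : ∀ x y z, dist (geod a (v z) (φ (v z) x)) (geod a (v z) (φ (v z) y)) ≤
      R * L * dist x y := fun x y z => by
    rw [dist_geod_geod a _ (hI _ x) (hI _ y), ← NNReal.dist_eq]
    calc dist (φ (v z) x) (φ (v z) y) * dist a (v z) ≤ (L * dist x y) * R :=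
          mul_le_mul ((hφ _).dist_le_mul x y) (hR z) dist_nonneg (by positivity)
      _ = R * L * dist x y := by ring
  refine LipschitzWith.of_dist_le_mul fun x y => ?_
  by_cases hxy : v x = v y
  · calc _ ≤ (R * L * dist x y : ℝ) := hxy ▸ key x y y
      _ ≤ 2 * (R * L * dist x y) := by
        linarith [show (0 : ℝ) ≤ R * L * dist x y by positivity]
      _ = ↑(2 * R * L) * dist x y := by push_cast; ring
  -- both points are joined through `a`, which both geodesics pass at time `0`
  have hx : φ (v x) y = 0 := hv y _ hxy
  have hy : φ (v y) x = 0 := hv x _ (Ne.symm hxy)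
  calc dist (geod a (v x) (φ (v x) x)) (geod a (v y) (φ (v y) y))
      ≤ dist (geod a (v x) (φ (v x) x)) (geod a (v x) (φ (v x) y)) +
          dist (geod a (v y) (φ (v y) x)) (geod a (v y) (φ (v y) y)) := by
        rw [hx, hy, NNReal.coe_zero, geod_zero, geod_zero]
        exact dist_triangle _ _ _
    _ ≤ R * L * dist x y + R * L * dist x y := add_le_add (key x y x) (key x y y)
    _ = ↑(2 * R * L) * dist x y := by push_cast; ring

theorem exists_lipschitzWith_eq_of_pairwise_disjoint_thickening {α : Type*} [PseudoMetricSpace α]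
    (a : X) (K : X → Set α) {δ : ℝ} (hδ : 0 < δ)
    (hK : Pairwise fun w z => Disjoint (thickening δ (K w)) (thickening δ (K z)))
    {R : ℝ≥0} (hR : ∀ w, (K w).Nonempty → dist a w ≤ R) :
    ∃ (L : ℝ≥0) (g : α → X), LipschitzWith L g ∧ (∀ w, ∀ x ∈ K w, g x = w) ∧
      ∀ x, dist a (g x) ≤ R := by
  classical
  set φ : X → α → ℝ≥0 := fun w => thickenedIndicator hδ (K w)
  have hsupp : ∀ w x, φ w x ≠ 0 → x ∈ thickening δ (K w) := fun w x h => by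
    by_contra hx
    exact h (thickenedIndicator_zero hδ _ hx)
  set v : α → X := fun x => if h : ∃ w, φ w x ≠ 0 then h.choose else a
  have hv : ∀ x w, w ≠ v x → φ w x = 0 := by
    intro x w hw
    by_contra hwx
    have h : ∃ w, φ w x ≠ 0 := ⟨w, hwx⟩
    simp only [v, dif_pos h] at hw
    exact Set.disjoint_left.1 (hK hw) (hsupp _ _ hwx) (hsupp _ _ h.choose_spec)
  have hvR : ∀ x, dist a (v x) ≤ R := by
    intro x
    by_cases h : ∃ w, φ w x ≠ 0
    · simp only [v, dif_pos h]
      obtain ⟨z, hz, -⟩ := mem_thickening_iff.1 (hsupp _ _ h.choose_spec)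
      exact hR _ ⟨z, hz⟩
    · simp [v, dif_neg h]
  have hvK : ∀ w, ∀ x ∈ K w, v x = w := fun w x hx => by
    by_contra hw
    simpa [φ, thickenedIndicator_one hδ _ hx] using hv x w (Ne.symm hw)
  refine ⟨2 * R * δ.toNNReal⁻¹, fun x => geod a (v x) (φ (v x) x),
    lipschitzWith_geod_comp a (fun w => lipschitzWith_thickenedIndicator hδ (K w))
      (fun w => thickenedIndicator_le_one hδ (K w)) hv hvR, fun w x hx => ?_, fun x => ?_⟩
  · simp only [hvK w x hx, φ, thickenedIndicator_one hδ _ hx, NNReal.coe_one, geod_one]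
  · have hφ1 : (φ (v x) x : ℝ) ≤ 1 := thickenedIndicator_le_one hδ _ x
    exact (dist_geod_left a (v x) ⟨(φ (v x) x).coe_nonneg, hφ1⟩).trans_le
      ((mul_le_of_le_one_left dist_nonneg hφ1).trans (hvR x))

end HadamardSpace

namespace MeasureTheory.SimpleFunc

variable {α : Type*} [MeasurableSpace α]

theorem exists_isCompact_subset_fiber [TopologicalSpace α] [T2Space α] [OpensMeasurableSpace α]
    {β : Type*} (μ : Measure α) [IsFiniteMeasure μ] [μ.InnerRegularCompactLTTop] (s : SimpleFunc α β)
    {ε : ℝ≥0∞} (hε : ε ≠ 0) :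
    ∃ K : β → Set α, (∀ y, IsCompact (K y)) ∧ (∀ y, K y ⊆ s ⁻¹' {y}) ∧
      μ {x | x ∉ K (s x)} ≤ ε := by
  have hε' : ε / s.range.card ≠ 0 := (ENNReal.div_pos hε (ENNReal.natCast_ne_top _)).ne'
  choose K hKs hK hμK using fun y =>
    (s.measurableSet_fiber y).exists_isCompact_sdiff_lt (measure_ne_top μ _) hε'
  refine ⟨K, hK, hKs, ?_⟩
  calc μ {x | x ∉ K (s x)} ≤ μ (⋃ y ∈ s.range, s ⁻¹' {y} \ K y) :=
        measure_mono fun x hx => mem_iUnion₂.2 ⟨s x, s.mem_range_self x, rfl, hx⟩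
    _ ≤ ∑ y ∈ s.range, μ (s ⁻¹' {y} \ K y) := measure_biUnion_finset_le _ _
    _ ≤ ∑ _y ∈ s.range, ε / s.range.card := Finset.sum_le_sum fun y _ => (hμK y).le
    _ ≤ ε := by
      rw [Finset.sum_const, nsmul_eq_mul]
      exact ENNReal.mul_div_le

theorem exists_lipschitzWith_lintegral_edist_rpow_lt [MetricSpace α] [OpensMeasurableSpace α]
    {X : Type*} [HadamardSpace X] [Nonempty X] (μ : Measure α) [IsFiniteMeasure μ]
    [μ.InnerRegularCompactLTTop] (s : SimpleFunc α X) {p : ℝ} (hp : 0 < p) {η : ℝ≥0∞} (hη : η ≠ 0) :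
    ∃ (L : ℝ≥0) (g : α → X), LipschitzWith L g ∧ ∫⁻ x, edist (s x) (g x) ^ p ∂μ < η := by
  let a : X := Classical.arbitrary X
  set R : ℝ≥0 := s.range.sup (nndist a)
  have hR : ∀ x, dist a (s x) ≤ R := fun x =>
    NNReal.coe_le_coe.2 (Finset.le_sup (f := nndist a) (s.mem_range_self x))
  set C : ℝ≥0∞ := ((2 * R : ℝ≥0) : ℝ≥0∞) ^ p
  obtain ⟨ε, hε, hεη⟩ := ENNReal.exists_pos_mul_lt
    (ENNReal.rpow_ne_top_of_nonneg hp.le ENNReal.coe_ne_top) hη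
  obtain ⟨K, hKc, hKs, hμK⟩ := s.exists_isCompact_subset_fiber μ hε.ne'
  have hKfin : {y | (K y).Nonempty}.Finite := s.finite_range.subset fun y ⟨x, hx⟩ => ⟨x, hKs y hx⟩
  have hKd : Pairwise fun y z => Disjoint (K y) (K z) := fun y z hyz =>
    ((Set.disjoint_singleton.2 hyz).preimage s).mono (hKs y) (hKs z)
  obtain ⟨δ, hδ, hKδ⟩ := exists_pos_pairwise_disjoint_thickening hKfin hKc hKd
  obtain ⟨L, g, hg, hgK, hga⟩ :=
    HadamardSpace.exists_lipschitzWith_eq_of_pairwise_disjoint_thickening a K hδ hKδ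
      (R := R) fun y ⟨x, hx⟩ => hKs y hx ▸ hR x
  have hsg : ∀ x, edist (s x) (g x) ^ p ≤ {x | x ∉ K (s x)}.indicator (fun _ => C) x := by
    intro x
    by_cases hx : x ∈ K (s x)
    · rw [hgK _ x hx, edist_self, ENNReal.zero_rpow_of_pos hp]
      exact zero_le
    rw [indicator_of_mem hx]
    refine ENNReal.rpow_le_rpow (edist_le_coe.2 ?_) hp.le
    calc nndist (s x) (g x) ≤ nndist (s x) a + nndist a (g x) := nndist_triangle _ _ _
      _ ≤ R + R := by
        rw [nndist_comm]
        exact add_le_add (hR x) (hga x)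
      _ = 2 * R := (two_mul R).symm
  refine ⟨L, g, hg, ?_⟩
  calc ∫⁻ x, edist (s x) (g x) ^ p ∂μ ≤ ∫⁻ x, {x | x ∉ K (s x)}.indicator (fun _ => C) x ∂μ :=
        MeasureTheory.lintegral_mono hsg
    _ ≤ C * μ {x | x ∉ K (s x)} := MeasureTheory.lintegral_indicator_const_le _ _
    _ ≤ C * ε := by gcongr
    _ < η := by rwa [mul_comm]

end MeasureTheory.SimpleFunc

theorem exists_simpleFunc_lintegral_edist_rpow_lt {α X : Type*} [MeasurableSpace α]
    [PseudoEMetricSpace X] [MeasurableSpace X] [OpensMeasurableSpace X]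
    [TopologicalSpace.SeparableSpace X] (μ : Measure α) {p : ℝ} (hp : 0 < p) {f : α → X}
    (hf : Measurable f) (a : X) (hfa : ∫⁻ x, edist (f x) a ^ p ∂μ ≠ ⊤) {η : ℝ≥0∞}
    (hη : η ≠ 0) : ∃ s : SimpleFunc α X, ∫⁻ x, edist (f x) (s x) ^ p ∂μ < η := by
  set s : ℕ → SimpleFunc α X := fun N => SimpleFunc.approxOn f hf univ a (mem_univ a) N
  have hdom : ∀ N x, edist (f x) (s N x) ^ p ≤ edist (f x) a ^ p := fun N x => by
    rw [edist_comm, edist_comm (f x)]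
    exact ENNReal.rpow_le_rpow (SimpleFunc.edist_approxOn_le hf (mem_univ a) x N) hp.le
  have hconv : ∀ x, Tendsto (fun N => edist (f x) (s N x) ^ p) atTop (𝓝 0) := fun x => by
    have h := (tendsto_const_nhds (x := f x)).edist
      (SimpleFunc.tendsto_approxOn hf (mem_univ a) (x := x) (by simp))
    rw [edist_self] at h
    have h' := ((ENNReal.continuous_rpow_const (y := p)).tendsto 0).comp h
    rwa [ENNReal.zero_rpow_of_pos hp] at h'
  have hlim : Tendsto (fun N => ∫⁻ x, edist (f x) (s N x) ^ p ∂μ) atTop (𝓝 0) := by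
    simpa using tendsto_lintegral_of_dominated_convergence _
      (fun N => (hf.edist (s N).measurable).pow_const p) (fun N => ae_of_all _ (hdom N)) hfa
      (ae_of_all _ hconv)
  obtain ⟨N, hN⟩ := ((tendsto_order.1 hlim).2 η (pos_iff_ne_zero.2 hη)).exists
  exact ⟨s N, hN⟩

theorem HadamardSpace.exists_lipschitzWith_lintegral_edist_rpow_lt {α X : Type*} [MetricSpace α]
    [MeasurableSpace α] [OpensMeasurableSpace α] (μ : Measure α) [IsFiniteMeasure μ]
    [μ.InnerRegularCompactLTTop] [HadamardSpace X] [TopologicalSpace.SeparableSpace X]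
    [MeasurableSpace X] [BorelSpace X] {p : ℝ} (hp : 1 ≤ p) {f : α → X} (hf : Measurable f)
    (a : X) (hfa : ∫⁻ x, edist (f x) a ^ p ∂μ ≠ ⊤) {η : ℝ≥0∞} (hη : η ≠ 0) :
    ∃ (L : ℝ≥0) (g : α → X), LipschitzWith L g ∧ ∫⁻ x, edist (f x) (g x) ^ p ∂μ < η := by
  have hp0 : 0 < p := by linarith
  have hc : (2 : ℝ≥0∞) ^ (p - 1) ≠ ⊤ := ENNReal.rpow_ne_top_of_nonneg (by linarith) (by simp)
  obtain ⟨η', hη', hη'η⟩ := ENNReal.exists_pos_mul_lt (a := 2 ^ (p - 1) * 2)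
    (ENNReal.mul_ne_top hc (by simp)) hη
  obtain ⟨s, hfs⟩ := exists_simpleFunc_lintegral_edist_rpow_lt μ hp0 hf a hfa hη'.ne'
  have : Nonempty X := ⟨a⟩
  obtain ⟨L, g, hg, hsg⟩ := s.exists_lipschitzWith_lintegral_edist_rpow_lt μ hp0 hη'.ne'
  refine ⟨L, g, hg, ?_⟩
  calc ∫⁻ x, edist (f x) (g x) ^ p ∂μ
      ≤ ∫⁻ x, 2 ^ (p - 1) * (edist (f x) (s x) ^ p + edist (s x) (g x) ^ p) ∂μ :=
        lintegral_mono fun x => (ENNReal.rpow_le_rpow (edist_triangle _ _ _) hp0.le).trans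
          (ENNReal.rpow_add_le_mul_rpow_add_rpow _ _ hp)
    _ = 2 ^ (p - 1) * (∫⁻ x, edist (f x) (s x) ^ p ∂μ + ∫⁻ x, edist (s x) (g x) ^ p ∂μ) := by
        rw [lintegral_const_mul' _ _ hc, lintegral_add_left ((hf.edist s.measurable).pow_const p)]
    _ ≤ 2 ^ (p - 1) * (η' + η') := by gcongr
    _ = η' * (2 ^ (p - 1) * 2) := by ring
    _ < η := hη'η

theorem ofReal_dist_rpow {X : Type*} [PseudoMetricSpace X] (x y : X) {p : ℝ} (hp : 0 ≤ p) :
    ENNReal.ofReal (dist x y ^ p) = edist x y ^ p := by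
  rw [edist_dist, ENNReal.ofReal_rpow_of_nonneg dist_nonneg hp]

theorem lipschitz_dense_in_Lp_general {n : ℕ} {H : Type*} [HadamardSpace H]
    [LocallyCompactSpace H] [MeasurableSpace H] [BorelSpace H]
    (Ω : Set (Fin n → ℝ)) (hΩb : Bornology.IsBounded Ω)
    (p : ℝ) (hp : 1 ≤ p)
    (f : (Fin n → ℝ) → H) (hf : Measurable f) (a : H)
    (hfp : (∫⁻ x in Ω, ENNReal.ofReal (dist (f x) a ^ p)) < ⊤) :
    ∀ ε > (0:ℝ), ∃ (K : NNReal) (g : (Fin n → ℝ) → H), LipschitzWith K g ∧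
      (∫⁻ x in Ω, ENNReal.ofReal (dist (f x) (g x) ^ p)) < ENNReal.ofReal (ε ^ p) := by
  intro ε hε
  have : ProperSpace H := HadamardSpace.properSpace
  have : IsFiniteMeasure (volume.restrict Ω) := isFiniteMeasure_restrict.2 hΩb.measure_lt_top.ne
  have hp0 : 0 ≤ p := by linarith
  simp only [ofReal_dist_rpow _ _ hp0] at hfp ⊢
  exact HadamardSpace.exists_lipschitzWith_lintegral_edist_rpow_lt _ hp hf a hfp.ne
    (ENNReal.ofReal_pos.2 (Real.rpow_pos_of_pos hε p)).ne'

/-- Density of Lipschitz functions in `L^p(Ω, H)` for a locally compact Hadamard space `H`,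
`Ω ⊂ ℝⁿ` open and bounded, and `p ∈ [1, ∞)`: every measurable `f : Ω → H` with finite
`p`-th moment can be approximated in the `L^p` distance by Lipschitz continuous maps. -/
theorem lipschitz_dense_in_Lp {n : ℕ} {H : Type*} [HadamardSpace H]
    [LocallyCompactSpace H] [MeasurableSpace H] [BorelSpace H]
    (Ω : Set (Fin n → ℝ)) (hΩo : IsOpen Ω) (hΩb : Bornology.IsBounded Ω)
    (p : ℝ) (hp : 1 ≤ p)
    (f : (Fin n → ℝ) → H) (hf : Measurable f) (a : H)
    (hfp : (∫⁻ x in Ω, ENNReal.ofReal (dist (f x) a ^ p)) < ⊤) :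
    ∀ ε > (0:ℝ), ∃ (K : NNReal) (g : (Fin n → ℝ) → H), LipschitzWith K g ∧
      (∫⁻ x in Ω, ENNReal.ofReal (dist (f x) (g x) ^ p)) < ENNReal.ofReal (ε ^ p) :=
  lipschitz_dense_in_Lp_general Ω hΩb p hp f hf a hfp
end
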